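/- arXiv:2206.03718 — 5 statements merged into one kernel-verified Lean document; each statement's English description precedes it below -/
import Mathlib

section
/- The loss objective L(S) = β₁|X⁺| − (β₁+β₂)|X⁺_S| + Σ_{R∈S}(β₀|X⁻_{{R}}| + β₂|X⁺_{{R}}| + λ|R|) is a supermodular function of S, i.e., −L is submodular, for any nonnegative parameters β₀, β₁, β₂, λ. -/
def covers {d : ℕ} (R : Finset (Fin d)) (v : Fin d → Bool) : Prop := ∀ j ∈ R, v j = true

instance {d : ℕ} (R : Finset (Fin d)) (v : Fin d → Bool) : Decidable (covers R v) :=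
  inferInstanceAs (Decidable (∀ j ∈ R, v j = true))

def XposCov {n d : ℕ} (x : Fin n → Fin d → Bool) (y : Fin n → Bool)
    (S : Finset (Finset (Fin d))) : Finset (Fin n) :=
  Finset.univ.filter (fun i => y i = true ∧ ∃ R ∈ S, covers R (x i))

def XposR {n d : ℕ} (x : Fin n → Fin d → Bool) (y : Fin n → Bool)
    (R : Finset (Fin d)) : Finset (Fin n) :=
  Finset.univ.filter (fun i => y i = true ∧ covers R (x i))

def XnegR {n d : ℕ} (x : Fin n → Fin d → Bool) (y : Fin n → Bool)
    (R : Finset (Fin d)) : Finset (Fin n) :=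
  Finset.univ.filter (fun i => y i = false ∧ covers R (x i))

noncomputable def Lobj {n d : ℕ} (x : Fin n → Fin d → Bool) (y : Fin n → Bool)
    (β₀ β₁ β₂ lam : ℝ) (S : Finset (Finset (Fin d))) : ℝ :=
  β₁ * ((Finset.univ.filter (fun i => y i = true)).card : ℝ)
    - (β₁ + β₂) * ((XposCov x y S).card : ℝ)
    + ∑ R ∈ S, (β₀ * ((XnegR x y R).card : ℝ) + β₂ * ((XposR x y R).card : ℝ)
        + lam * (R.card : ℝ))

lemma XposCov_insert {n d : ℕ} (x : Fin n → Fin d → Bool) (y : Fin n → Bool)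
    (e : Finset (Fin d)) (S : Finset (Finset (Fin d))) :
    XposCov x y (insert e S) = XposR x y e ∪ XposCov x y S := by
  ext i
  simp only [XposCov, XposR, Finset.mem_filter, Finset.mem_union, Finset.mem_insert,
    Finset.mem_univ, true_and]
  constructor
  · rintro ⟨hy, R, (rfl | hR), hc⟩
    · exact Or.inl ⟨hy, hc⟩
    · exact Or.inr ⟨hy, R, hR, hc⟩
  · rintro (⟨hy, hc⟩ | ⟨hy, R, hR, hc⟩)
    · exact ⟨hy, e, Or.inl rfl, hc⟩
    · exact ⟨hy, R, Or.inr hR, hc⟩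

lemma XposCov_mono {n d : ℕ} (x : Fin n → Fin d → Bool) (y : Fin n → Bool)
    {A B : Finset (Finset (Fin d))} (h : A ⊆ B) : XposCov x y A ⊆ XposCov x y B := by
  intro i hi
  simp only [XposCov, Finset.mem_filter, Finset.mem_univ, true_and] at hi ⊢
  obtain ⟨hy, R, hR, hc⟩ := hi
  exact ⟨hy, R, h hR, hc⟩

lemma card_insert_eq {n d : ℕ} (x : Fin n → Fin d → Bool) (y : Fin n → Bool)
    (e : Finset (Fin d)) (S : Finset (Finset (Fin d))) :
    ((XposCov x y (insert e S)).card : ℝ) =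
      ((XposR x y e \ XposCov x y S).card : ℝ) + (XposCov x y S).card := by
  rw [XposCov_insert]
  rw [← Finset.card_sdiff_add_card]
  push_cast
  ring

theorem stmt1 {n d : ℕ} (x : Fin n → Fin d → Bool) (y : Fin n → Bool)
    (β₀ β₁ β₂ lam : ℝ) (hβ₀ : 0 ≤ β₀) (hβ₁ : 0 ≤ β₁) (hβ₂ : 0 ≤ β₂) (hlam : 0 ≤ lam) :
    ∀ A B : Finset (Finset (Fin d)), A ⊆ B → ∀ e ∉ B,
      (-Lobj x y β₀ β₁ β₂ lam (insert e A)) - (-Lobj x y β₀ β₁ β₂ lam A) ≥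
        (-Lobj x y β₀ β₁ β₂ lam (insert e B)) - (-Lobj x y β₀ β₁ β₂ lam B) := by
  intro A B hAB e heB
  have heA : e ∉ A := fun h => heB (hAB h)
  have hgain : ((XposR x y e \ XposCov x y B).card : ℝ) ≤
      ((XposR x y e \ XposCov x y A).card : ℝ) := by
    exact_mod_cast Finset.card_le_card
      (Finset.sdiff_subset_sdiff (Finset.Subset.refl _) (XposCov_mono x y hAB))
  unfold Lobj
  rw [Finset.sum_insert heA, Finset.sum_insert heB, card_insert_eq, card_insert_eq]
  nlinarith [hgain]
end

section
/- Every rule objective v(R) = Σ_{i=1}^n ω_i·𝟙[R ⊆ x_i] − λ|R| can be written as a constant plus a difference of two non-negative monotone submodular functions: v(R) = Σ_i ω_i + u(R) − w(R), where u(R) = Σ_{i:ω_i<0}(−ω_i)𝟙[R ⊄ x_i] and w(R) = Σ_{i:ω_i>0} ω_i 𝟙[R ⊄ x_i] + λ|R|. -/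
noncomputable def uFun {n d : ℕ} (x : Fin n → Fin d → Bool) (ω : Fin n → ℝ)
    (R : Finset (Fin d)) : ℝ :=
  ∑ i ∈ Finset.univ.filter (fun i => ω i < 0 ∧ ¬ covers R (x i)), (-ω i)

noncomputable def wFun {n d : ℕ} (x : Fin n → Fin d → Bool) (ω : Fin n → ℝ) (lam : ℝ)
    (R : Finset (Fin d)) : ℝ :=
  (∑ i ∈ Finset.univ.filter (fun i => 0 < ω i ∧ ¬ covers R (x i)), ω i) + lam * (R.card : ℝ)

noncomputable def vFun {n d : ℕ} (x : Fin n → Fin d → Bool) (ω : Fin n → ℝ) (lam : ℝ)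
    (R : Finset (Fin d)) : ℝ :=
  (∑ i : Fin n, ω i * (if covers R (x i) then 1 else 0)) - lam * (R.card : ℝ)

lemma covers_mono {d : ℕ} {A B : Finset (Fin d)} (h : A ⊆ B) {v : Fin d → Bool}
    (hc : covers B v) : covers A v := fun j hj => hc j (h hj)

lemma covers_insert {d : ℕ} {R : Finset (Fin d)} {e : Fin d} {v : Fin d → Bool} :
    covers (insert e R) v ↔ v e = true ∧ covers R v := by
  simp [covers, forall_and]

lemma ite_term_nonneg {d : ℕ} (c : ℝ) (P : Prop) [Decidable P] (hc : P → 0 ≤ c)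
    (R : Finset (Fin d)) (v : Fin d → Bool) :
    0 ≤ (if P ∧ ¬ covers R v then c else 0) := by
  by_cases h : P ∧ ¬ covers R v
  · simpa [h] using hc h.1
  · simp [h]

lemma ite_term_mono {d : ℕ} (c : ℝ) (P : Prop) [Decidable P] (hc : P → 0 ≤ c)
    {A B : Finset (Fin d)} (h : A ⊆ B) (v : Fin d → Bool) :
    (if P ∧ ¬ covers A v then c else 0) ≤ (if P ∧ ¬ covers B v then c else 0) := by
  by_cases hA : P ∧ ¬ covers A v
  · have hB : P ∧ ¬ covers B v := ⟨hA.1, fun hcB => hA.2 (covers_mono h hcB)⟩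
    simp [hA, hB]
  · simp only [hA, if_false]
    exact ite_term_nonneg c P hc B v

lemma ite_term_submod {d : ℕ} (c : ℝ) (P : Prop) [Decidable P] (hc : P → 0 ≤ c)
    {A B : Finset (Fin d)} (h : A ⊆ B) (e : Fin d) (v : Fin d → Bool) :
    (if P ∧ ¬ covers (insert e A) v then c else 0) - (if P ∧ ¬ covers A v then c else 0) ≥
    (if P ∧ ¬ covers (insert e B) v then c else 0) - (if P ∧ ¬ covers B v then c else 0) := by
  by_cases hP : P
  · have hc' : 0 ≤ c := hc hP
    have hAB : covers B v → covers A v := covers_mono h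
    by_cases hve : v e = true <;> by_cases hA : covers A v <;> by_cases hB : covers B v <;>
      simp_all [covers_insert] <;> linarith
  · simp [hP]

lemma uFun_eq {n d : ℕ} (x : Fin n → Fin d → Bool) (ω : Fin n → ℝ) (R : Finset (Fin d)) :
    uFun x ω R = ∑ i : Fin n, (if ω i < 0 ∧ ¬ covers R (x i) then -ω i else 0) := by
  rw [uFun, Finset.sum_filter]

lemma wFun_eq {n d : ℕ} (x : Fin n → Fin d → Bool) (ω : Fin n → ℝ) (lam : ℝ)
    (R : Finset (Fin d)) :
    wFun x ω lam R =
      (∑ i : Fin n, (if 0 < ω i ∧ ¬ covers R (x i) then ω i else 0)) + lam * (R.card : ℝ) := by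
  rw [wFun, Finset.sum_filter]

theorem stmt5 {n d : ℕ} (x : Fin n → Fin d → Bool) (ω : Fin n → ℝ) (lam : ℝ)
    (hlam : 0 ≤ lam) :
    (∀ R : Finset (Fin d),
      vFun x ω lam R = (∑ i : Fin n, ω i) + uFun x ω R - wFun x ω lam R) ∧
    (∀ R : Finset (Fin d), 0 ≤ uFun x ω R) ∧
    (∀ A B : Finset (Fin d), A ⊆ B → uFun x ω A ≤ uFun x ω B) ∧
    (∀ A B : Finset (Fin d), A ⊆ B → ∀ e ∉ B,
      uFun x ω (insert e A) - uFun x ω A ≥ uFun x ω (insert e B) - uFun x ω B) ∧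
    (∀ R : Finset (Fin d), 0 ≤ wFun x ω lam R) ∧
    (∀ A B : Finset (Fin d), A ⊆ B → wFun x ω lam A ≤ wFun x ω lam B) ∧
    (∀ A B : Finset (Fin d), A ⊆ B → ∀ e ∉ B,
      wFun x ω lam (insert e A) - wFun x ω lam A ≥
        wFun x ω lam (insert e B) - wFun x ω lam B) := by
  have hcu : ∀ i : Fin n, ω i < 0 → (0:ℝ) ≤ -ω i := fun i h => by linarith
  have hcw : ∀ i : Fin n, 0 < ω i → (0:ℝ) ≤ ω i := fun i h => le_of_lt h
  refine ⟨?_, ?_, ?_, ?_, ?_, ?_, ?_⟩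
  · intro R
    rw [vFun, uFun_eq, wFun_eq]
    have : (∑ i : Fin n, ω i * (if covers R (x i) then 1 else 0)) =
        (∑ i : Fin n, ω i) + (∑ i : Fin n, (if ω i < 0 ∧ ¬ covers R (x i) then -ω i else 0))
          - (∑ i : Fin n, (if 0 < ω i ∧ ¬ covers R (x i) then ω i else 0)) := by
      rw [← Finset.sum_add_distrib, ← Finset.sum_sub_distrib]
      refine Finset.sum_congr rfl fun i _ => ?_
      by_cases hR : covers R (x i)
      · simp [hR]
      · rcases lt_trichotomy (ω i) 0 with h | h | h <;>
          simp [hR, h, not_lt_of_gt, le_of_lt] <;> linarith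
    rw [this]; ring
  · intro R
    rw [uFun_eq]
    exact Finset.sum_nonneg fun i _ => ite_term_nonneg _ _ (hcu i) R (x i)
  · intro A B hAB
    rw [uFun_eq, uFun_eq]
    exact Finset.sum_le_sum fun i _ => ite_term_mono _ _ (hcu i) hAB (x i)
  · intro A B hAB e _
    simp only [uFun_eq, ← Finset.sum_sub_distrib]
    exact Finset.sum_le_sum fun i _ => ite_term_submod _ _ (hcu i) hAB e (x i)
  · intro R
    rw [wFun_eq]
    have h1 : 0 ≤ ∑ i : Fin n, (if 0 < ω i ∧ ¬ covers R (x i) then ω i else 0) :=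
      Finset.sum_nonneg fun i _ => ite_term_nonneg _ _ (hcw i) R (x i)
    positivity
  · intro A B hAB
    rw [wFun_eq, wFun_eq]
    have h1 := Finset.sum_le_sum fun i (_ : i ∈ Finset.univ) => ite_term_mono _ _ (hcw i) hAB (x i)
    have h2 : (A.card : ℝ) ≤ B.card := by exact_mod_cast Finset.card_le_card hAB
    nlinarith
  · intro A B hAB e heB
    have heA : e ∉ A := fun h => heB (hAB h)
    rw [wFun_eq, wFun_eq, wFun_eq, wFun_eq,
      Finset.card_insert_of_notMem heA, Finset.card_insert_of_notMem heB]
    have h1 := Finset.sum_le_sum fun i (_ : i ∈ Finset.univ) =>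
      ite_term_submod _ _ (hcw i) hAB e (x i)
    simp only [Finset.sum_sub_distrib] at h1
    push_cast
    linarith
end

section
/- For a monotone submodular function f: 2^V → ℝ≥0, any X ⊆ V, and any Y ⊆ V, the modular function m¹_{f,X}(Y) := f(X) − Σ_{j ∈ X∖Y} f(j | X∖{j}) + Σ_{j ∈ Y∖X} f(j | ∅) satisfies m¹_{f,X}(Y) ≥ f(Y), with equality when Y = X. -/
/-- Marginal gain f(j | A) = f(A ∪ {j}) − f(A). -/
def marg {V : Type*} [DecidableEq V] (f : Finset V → ℝ) (j : V) (A : Finset V) : ℝ :=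
  f (insert j A) - f A

private lemma lemA {V : Type*} [DecidableEq V] (f : Finset V → ℝ)
    (hsub : ∀ A B : Finset V, A ⊆ B → ∀ e ∉ B,
      f (insert e A) - f A ≥ f (insert e B) - f B)
    (X : Finset V) :
    ∀ S : Finset V, S ⊆ X → (∑ j ∈ S, marg f j (X.erase j)) ≤ f X - f (X \ S) := by
  intro S
  induction S using Finset.induction_on with
  | empty => simp
  | @insert a S ha ih =>
    intro hsub'
    have haX : a ∈ X := hsub' (Finset.mem_insert_self a S)
    have hSX : S ⊆ X := fun x hx => hsub' (Finset.mem_insert_of_mem hx)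
    have haXS : a ∈ X \ S := Finset.mem_sdiff.2 ⟨haX, ha⟩
    have hkey : f (insert a ((X \ S).erase a)) - f ((X \ S).erase a)
        ≥ f (insert a (X.erase a)) - f (X.erase a) := by
      exact hsub _ _ (Finset.erase_subset_erase a Finset.sdiff_subset)
        a (Finset.notMem_erase a X)
    rw [Finset.insert_erase haXS] at hkey
    rw [Finset.insert_erase haX] at hkey
    have h1 : marg f a (X.erase a) ≤ f (X \ S) - f ((X \ S).erase a) := by
      unfold marg
      rw [Finset.insert_erase haX]
      linarith
    rw [Finset.sum_insert ha, Finset.sdiff_insert]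
    have h2 := ih hSX
    linarith

private lemma lemB {V : Type*} [DecidableEq V] (f : Finset V → ℝ)
    (hsub : ∀ A B : Finset V, A ⊆ B → ∀ e ∉ B,
      f (insert e A) - f A ≥ f (insert e B) - f B) :
    ∀ S B : Finset V, Disjoint S B → f (B ∪ S) ≤ f B + ∑ j ∈ S, marg f j ∅ := by
  intro S
  induction S using Finset.induction_on with
  | empty => simp
  | @insert a S ha ih =>
    intro B hd
    rw [Finset.disjoint_insert_left] at hd
    obtain ⟨haB, hdS⟩ := hd
    have haBS : a ∉ B ∪ S := by
      simp [haB, ha]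
    have hkey := hsub ∅ (B ∪ S) (Finset.empty_subset _) a haBS
    have h1 : f (B ∪ insert a S) = f (insert a (B ∪ S)) := by
      rw [Finset.union_insert]
    rw [Finset.sum_insert ha]
    have h2 := ih B hdS
    have h3 : marg f a ∅ = f (insert a ∅) - f ∅ := rfl
    rw [h1]
    linarith

theorem stmt8 {V : Type*} [DecidableEq V] (f : Finset V → ℝ)
    (hnn : ∀ A : Finset V, 0 ≤ f A)
    (hmono : ∀ A B : Finset V, A ⊆ B → f A ≤ f B)
    (hsub : ∀ A B : Finset V, A ⊆ B → ∀ e ∉ B,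
      f (insert e A) - f A ≥ f (insert e B) - f B)
    (X : Finset V) :
    (∀ Y : Finset V,
      f X - (∑ j ∈ X \ Y, marg f j (X.erase j)) + (∑ j ∈ Y \ X, marg f j ∅) ≥ f Y) ∧
    (f X - (∑ j ∈ X \ X, marg f j (X.erase j)) + (∑ j ∈ X \ X, marg f j ∅) = f X) := by
  constructor
  · intro Y
    have hA := lemA f hsub X (X \ Y) Finset.sdiff_subset
    rw [Finset.sdiff_sdiff_self_left] at hA
    have hdisj : Disjoint (Y \ X) (X ∩ Y) :=
      Finset.disjoint_of_subset_right Finset.inter_subset_left Finset.sdiff_disjoint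
    have hB := lemB f hsub (Y \ X) (X ∩ Y) hdisj
    have hY : (X ∩ Y) ∪ (Y \ X) = Y := by
      ext x
      simp only [Finset.mem_union, Finset.mem_inter, Finset.mem_sdiff]
      tauto
    rw [hY] at hB
    linarith
  · simp
end

section
/- Let f: 2^V → ℝ be submodular, X ⊆ V with |X| = m, and π a bijection [|V|] → V such that {π(1),...,π(m)} = X. Define the chain S^π_0 = ∅, S^π_j = {π(1),...,π(j)}, and the modular function h(Y) = Σ_{j∈Y} [f(S^π_{π^{-1}(j)}) − f(S^π_{π^{-1}(j)−1})] + f(∅). Then h(Y) ≤ f(Y) for all Y ⊆ V, and h(X) = f(X). -/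
/-- The chain set S^π_j = {π(0), ..., π(j-1)} (0-indexed). -/
def chainSet {V : Type*} [Fintype V] [DecidableEq V]
    (π : Fin (Fintype.card V) ≃ V) (j : ℕ) : Finset V :=
  (Finset.univ.filter (fun i : Fin (Fintype.card V) => (i : ℕ) < j)).image π

lemma mem_chainSet {V : Type*} [Fintype V] [DecidableEq V]
    (π : Fin (Fintype.card V) ≃ V) (j : ℕ) (v : V) :
    v ∈ chainSet π j ↔ (π.symm v : ℕ) < j := by
  simp only [chainSet, Finset.mem_image, Finset.mem_filter, Finset.mem_univ, true_and]
  constructor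
  · rintro ⟨i, hi, rfl⟩; simpa using hi
  · intro h; exact ⟨π.symm v, h, π.apply_symm_apply v⟩

lemma chainSet_mono {V : Type*} [Fintype V] [DecidableEq V]
    (π : Fin (Fintype.card V) ≃ V) {j j' : ℕ} (h : j ≤ j') :
    chainSet π j ⊆ chainSet π j' := by
  intro v hv
  rw [mem_chainSet] at hv ⊢
  omega

lemma chainSet_succ {V : Type*} [Fintype V] [DecidableEq V]
    (π : Fin (Fintype.card V) ≃ V) (k : Fin (Fintype.card V)) :
    chainSet π ((k : ℕ) + 1) = insert (π k) (chainSet π (k : ℕ)) := by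
  ext v
  simp only [mem_chainSet, Finset.mem_insert, Nat.lt_succ_iff_lt_or_eq]
  constructor
  · rintro (h | h)
    · exact Or.inr h
    · exact Or.inl ((π.symm_apply_eq).mp (Fin.ext h))
  · rintro (rfl | h)
    · simp
    · exact Or.inl h

lemma not_mem_chainSet_self {V : Type*} [Fintype V] [DecidableEq V]
    (π : Fin (Fintype.card V) ≃ V) (k : Fin (Fintype.card V)) :
    π k ∉ chainSet π (k : ℕ) := by
  simp [mem_chainSet]

lemma chainSet_card_eq_univ {V : Type*} [Fintype V] [DecidableEq V]
    (π : Fin (Fintype.card V) ≃ V) :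
    chainSet π (Fintype.card V) = Finset.univ := by
  ext v; simp [mem_chainSet, (π.symm v).isLt]

/-- Telescoping key identity. -/
lemma key_telescope {V : Type*} [Fintype V] [DecidableEq V] (f : Finset V → ℝ)
    (π : Fin (Fintype.card V) ≃ V) (Y : Finset V) :
    (∑ j ∈ Y, (f (Y ∩ chainSet π ((π.symm j : ℕ) + 1)) - f (Y ∩ chainSet π (π.symm j : ℕ))))
      = f Y - f ∅ := by
  have h1 : (∑ j ∈ Y, (f (Y ∩ chainSet π ((π.symm j : ℕ) + 1)) - f (Y ∩ chainSet π (π.symm j : ℕ))))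
      = ∑ k ∈ Y.image π.symm,
          (f (Y ∩ chainSet π ((k : ℕ) + 1)) - f (Y ∩ chainSet π (k : ℕ))) := by
    rw [Finset.sum_image (fun a _ b _ h => π.symm.injective h)]
  have h2 : (∑ k ∈ Y.image π.symm,
          (f (Y ∩ chainSet π ((k : ℕ) + 1)) - f (Y ∩ chainSet π (k : ℕ))))
      = ∑ k : Fin (Fintype.card V),
          (f (Y ∩ chainSet π ((k : ℕ) + 1)) - f (Y ∩ chainSet π (k : ℕ))) := by
    apply Finset.sum_subset (Finset.subset_univ _)
    intro k _ hk
    have hpk : π k ∉ Y := by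
      intro h
      exact hk (Finset.mem_image.mpr ⟨π k, h, π.symm_apply_apply k⟩)
    have : Y ∩ chainSet π ((k : ℕ) + 1) = Y ∩ chainSet π (k : ℕ) := by
      rw [chainSet_succ]
      ext v
      simp only [Finset.mem_inter, Finset.mem_insert]
      constructor
      · rintro ⟨hv, rfl | hv'⟩
        · exact absurd hv hpk
        · exact ⟨hv, hv'⟩
      · rintro ⟨hv, hv'⟩; exact ⟨hv, Or.inr hv'⟩
    rw [this, sub_self]
  rw [h1, h2]
  rw [Fin.sum_univ_eq_sum_range
    (fun i => f (Y ∩ chainSet π (i + 1)) - f (Y ∩ chainSet π i))]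
  rw [Finset.sum_range_sub (fun i => f (Y ∩ chainSet π i))]
  rw [chainSet_card_eq_univ, Finset.inter_univ]
  congr 1
  have : chainSet π 0 = ∅ := by ext v; simp [mem_chainSet]
  rw [this, Finset.inter_empty]

theorem stmt10 {V : Type*} [Fintype V] [DecidableEq V] (f : Finset V → ℝ)
    (hsub : ∀ A B : Finset V, A ⊆ B → ∀ e ∉ B,
      f (insert e A) - f A ≥ f (insert e B) - f B)
    (X : Finset V) (π : Fin (Fintype.card V) ≃ V)
    (hX : X = chainSet π X.card) :
    (∀ Y : Finset V,
      (∑ j ∈ Y, (f (chainSet π ((π.symm j : ℕ) + 1)) - f (chainSet π (π.symm j : ℕ))))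
        + f ∅ ≤ f Y) ∧
    (∑ j ∈ X, (f (chainSet π ((π.symm j : ℕ) + 1)) - f (chainSet π (π.symm j : ℕ))))
        + f ∅ = f X := by
  constructor
  · intro Y
    have hle : (∑ j ∈ Y, (f (chainSet π ((π.symm j : ℕ) + 1)) - f (chainSet π (π.symm j : ℕ))))
        ≤ ∑ j ∈ Y, (f (Y ∩ chainSet π ((π.symm j : ℕ) + 1)) - f (Y ∩ chainSet π (π.symm j : ℕ))) := by
      apply Finset.sum_le_sum
      intro j hj
      set k := π.symm j with hk
      have hpk : π k = j := π.apply_symm_apply j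
      have hnot := not_mem_chainSet_self π k
      have hsub' := hsub (Y ∩ chainSet π (k : ℕ)) (chainSet π (k : ℕ))
        Finset.inter_subset_right (π k) hnot
      have hins : Y ∩ chainSet π ((k : ℕ) + 1) = insert (π k) (Y ∩ chainSet π (k : ℕ)) := by
        rw [chainSet_succ]
        ext v
        simp only [Finset.mem_inter, Finset.mem_insert]
        constructor
        · rintro ⟨hv, rfl | hv'⟩
          · exact Or.inl rfl
          · exact Or.inr ⟨hv, hv'⟩
        · rintro (rfl | ⟨hv, hv'⟩)
          · exact ⟨hpk ▸ hj, Or.inl rfl⟩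
          · exact ⟨hv, Or.inr hv'⟩
      rw [hins, chainSet_succ]
      exact hsub'
    have := key_telescope f π Y
    linarith
  · have heq : (∑ j ∈ X, (f (chainSet π ((π.symm j : ℕ) + 1)) - f (chainSet π (π.symm j : ℕ))))
        = ∑ j ∈ X, (f (X ∩ chainSet π ((π.symm j : ℕ) + 1)) - f (X ∩ chainSet π (π.symm j : ℕ))) := by
      apply Finset.sum_congr rfl
      intro j hj
      have hjlt : (π.symm j : ℕ) < X.card := by
        rw [hX] at hj
        exact (mem_chainSet π _ j).mp hj
      have hs1 : chainSet π ((π.symm j : ℕ) + 1) ⊆ X := by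
        rw [hX]; exact chainSet_mono π hjlt
      have hs2 : chainSet π (π.symm j : ℕ) ⊆ X := by
        rw [hX]; exact chainSet_mono π (le_of_lt hjlt)
      rw [Finset.inter_eq_right.mpr hs1, Finset.inter_eq_right.mpr hs2]
    rw [heq, key_telescope f π X]
    ring
end

section
/- Σ_{i=1}^n l_β(P̃_S(x_i), y_i) + λΣ_{R∈S}|R| = β₁|X⁺| − (β₁+β₂)|X⁺_S| + Σ_{R∈S}(β₀|X⁻_{{R}}| + β₂|X⁺_{{R}}| + λ|R|), for all rule sets S and parameters β₀, β₁, β₂, λ ≥ 0. -/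
noncomputable def lbeta (β₀ β₁ β₂ : ℝ) (yhat : ℕ) (y : Bool) : ℝ :=
  if y = false then β₀ * yhat
  else if yhat ≤ 1 then β₁ * (1 - (yhat : ℝ))
  else β₂ * ((yhat : ℝ) - 1)

def Ptilde {d : ℕ} (S : Finset (Finset (Fin d))) (v : Fin d → Bool) : ℕ :=
  ∑ R ∈ S, (if covers R v then 1 else 0)

def Xpos {n d : ℕ} (_x : Fin n → Fin d → Bool) (y : Fin n → Bool) : Finset (Fin n) :=
  Finset.univ.filter (fun i => y i = true)

lemma indic_sum {n : ℕ} (p : Fin n → Prop) [DecidablePred p] (c : ℝ) :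
    (∑ i : Fin n, if p i then c else 0) = c * ((Finset.univ.filter p).card : ℝ) := by
  rw [Finset.sum_ite, Finset.sum_const, Finset.sum_const_zero, add_zero, nsmul_eq_mul, mul_comm]

lemma key_pt {n d : ℕ} (x : Fin n → Fin d → Bool) (y : Fin n → Bool)
    (β₀ β₁ β₂ : ℝ) (S : Finset (Finset (Fin d))) (i : Fin n) :
    lbeta β₀ β₁ β₂ (Ptilde S (x i)) (y i)
      = (if y i = true then β₁ else 0)
        - (if y i = true ∧ ∃ R ∈ S, covers R (x i) then (β₁ + β₂) else 0)
        + ∑ R ∈ S, ((if y i = false ∧ covers R (x i) then β₀ else 0)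
            + (if y i = true ∧ covers R (x i) then β₂ else 0)) := by
  unfold lbeta
  cases hy : y i with
  | false =>
      simp only [hy, Ptilde, Bool.false_eq_true, if_false, if_true, true_and, false_and,
        add_zero, if_neg (Bool.false_ne_true), sub_zero, zero_sub, neg_zero, zero_add]
      push_cast
      rw [Finset.mul_sum]
      simp [mul_ite]
  | true =>
      have hsum : (∑ R ∈ S, ((if y i = false ∧ covers R (x i) then β₀ else 0)
            + (if y i = true ∧ covers R (x i) then β₂ else 0)))
          = β₂ * (Ptilde S (x i) : ℝ) := by
        simp only [hy, Ptilde]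
        push_cast
        rw [Finset.mul_sum]
        simp [mul_ite]
      have hex : (∃ R ∈ S, covers R (x i)) ↔ Ptilde S (x i) ≠ 0 := by
        rw [Ptilde, ne_eq, Finset.sum_eq_zero_iff]
        push_neg
        simp
      simp only [hy] at hsum ⊢
      rw [hsum]
      simp only [if_true, true_and, Bool.true_eq_false, if_false]
      rcases Nat.eq_zero_or_pos (Ptilde S (x i)) with h0 | h1
      · rw [h0]
        have : ¬ (∃ R ∈ S, covers R (x i)) := by rw [hex]; simp [h0]
        simp [this]
      · have hexT : (∃ R ∈ S, covers R (x i)) := hex.mpr (by omega)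
        rw [if_pos hexT]
        rcases eq_or_lt_of_le (show 1 ≤ Ptilde S (x i) from h1) with h1' | h2
        · rw [← h1']
          norm_num
        · rw [if_neg (by omega)]
          ring

theorem stmt15 {n d : ℕ} (x : Fin n → Fin d → Bool) (y : Fin n → Bool)
    (β₀ β₁ β₂ lam : ℝ) (hβ₀ : 0 ≤ β₀) (hβ₁ : 0 ≤ β₁) (hβ₂ : 0 ≤ β₂) (hlam : 0 ≤ lam)
    (S : Finset (Finset (Fin d))) :
    (∑ i : Fin n, lbeta β₀ β₁ β₂ (Ptilde S (x i)) (y i))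
        + lam * ∑ R ∈ S, (R.card : ℝ)
      = β₁ * ((Xpos x y).card : ℝ) - (β₁ + β₂) * ((XposCov x y S).card : ℝ)
        + ∑ R ∈ S, (β₀ * ((XnegR x y R).card : ℝ) + β₂ * ((XposR x y R).card : ℝ)
            + lam * (R.card : ℝ)) := by
  rw [Finset.sum_congr rfl (fun i _ => key_pt x y β₀ β₁ β₂ S i)]
  rw [Finset.sum_add_distrib, Finset.sum_sub_distrib, Finset.sum_comm]
  rw [indic_sum (fun i => y i = true) β₁,
      indic_sum (fun i => y i = true ∧ ∃ R ∈ S, covers R (x i)) (β₁ + β₂)]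
  have hR : ∀ R ∈ S, (∑ i : Fin n, ((if y i = false ∧ covers R (x i) then β₀ else 0)
        + (if y i = true ∧ covers R (x i) then β₂ else 0)))
      = β₀ * ((XnegR x y R).card : ℝ) + β₂ * ((XposR x y R).card : ℝ) := by
    intro R _
    rw [Finset.sum_add_distrib,
        indic_sum (fun i => y i = false ∧ covers R (x i)) β₀,
        indic_sum (fun i => y i = true ∧ covers R (x i)) β₂]
    rfl
  rw [Finset.sum_congr rfl hR, Finset.mul_sum]
  simp only [Xpos, XposCov, Finset.sum_add_distrib]
  ring
end
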